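/- arXiv:1808.03638 — 2 statements merged into one kernel-verified Lean document; each statement's English description precedes it below -/
import Mathlib

section
/- As formal power series in q, Σ_{n≥1} p_2(n) q^n = (1/(q;q)_∞)·(Σ_{n≥1} q^n/(1−q^n))² + Σ_{n≥1} n·p(n) q^n, where p_2(n) = Σ_m m² p(m,n). -/
open Finset PowerSeries

noncomputable section

/-- number of partitions of `n` -/
def pp (n : ℕ) : ℕ := Fintype.card (Nat.Partition n)

/-- number of partitions of `n` with exactly `m` parts -/
def pmn (m n : ℕ) : ℕ :=
  ((univ : Finset (Nat.Partition n)).filter fun l => l.parts.card = m).card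

/-- `p_2(n) = Σ_m m² p(m,n)` (parts count is at most `n`) -/
def p2 (n : ℕ) : ℕ := ∑ m ∈ range (n + 1), m ^ 2 * pmn m n

/-- rank = largest part − number of parts -/
def rank {n : ℕ} (l : Nat.Partition n) : ℤ := (l.parts.sup : ℤ) - l.parts.card

/-- number of partitions of `n` with rank `m` -/
def Nrank (m : ℤ) (n : ℕ) : ℕ :=
  ((univ : Finset (Nat.Partition n)).filter fun l => rank l = m).card

/-- second rank moment (rank of a partition of `n` lies in `[-n,n]`) -/
def N2 (n : ℕ) : ℤ := ∑ m ∈ Finset.Icc (-(n : ℤ)) n, m ^ 2 * Nrank m n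

/-- Andrews–Garvan crank -/
def crank {n : ℕ} (l : Nat.Partition n) : ℤ :=
  if l.parts.count 1 = 0 then (l.parts.sup : ℤ)
  else ((l.parts.filter fun a => l.parts.count 1 < a).card : ℤ) - l.parts.count 1

/-- number of partitions of `n` with crank `m`, with the usual convention for `n = 1` -/
def Mcrank (m : ℤ) (n : ℕ) : ℤ :=
  if n = 1 then (if m = 0 then -1 else if m = 1 ∨ m = -1 then 1 else 0)
  else (((univ : Finset (Nat.Partition n)).filter fun l => crank l = m).card : ℤ)

/-- second crank moment -/
def M2 (n : ℕ) : ℤ := ∑ m ∈ Finset.Icc (-(n : ℤ)) n, m ^ 2 * Mcrank m n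

def smallestPart {n : ℕ} (l : Nat.Partition n) : ℕ := sInf {a | a ∈ l.parts}

/-- total number of appearances of the smallest part in all partitions of `n` -/
def spt (n : ℕ) : ℕ := ∑ l : Nat.Partition n, l.parts.count (smallestPart l)

def d (n : ℕ) : ℕ := n.divisors.card
def sigma1 (n : ℕ) : ℕ := ∑ k ∈ n.divisors, k

/-- partitions of `n` into exactly `m` distinct parts -/
def bmn (m n : ℕ) : ℕ :=
  ((univ : Finset (Nat.Partition n)).filter fun l => l.parts.card = m ∧ l.parts.Nodup).card

/-- number of divisors of `m` that are ≤ N -/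
def g (m N : ℕ) : ℕ := (m.divisors.filter fun e => e ≤ N).card

/-- `p(k)` minus the number of partitions of `k` with all parts ≤ N -/
def f (k N : ℕ) : ℕ :=
  pp k - ((univ : Finset (Nat.Partition k)).filter fun l => ∀ a ∈ l.parts, a ≤ N).card

/-- `S(n) = Σ_{k,N≥1} f(k,N) g(n−k,N)`; terms vanish for `k > n` or `N ≥ k` -/
def S (n : ℕ) : ℕ := ∑ k ∈ Icc 1 n, ∑ N ∈ Icc 1 n, f k N * g (n - k) N

/-- `(q;q)_n` -/
def qPoch (n : ℕ) : PowerSeries ℚ := ∏ k ∈ Icc 1 n, (1 - X ^ k)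

/-- `(q;q)_∞`, defined coefficient-wise (coefficients of `q^N` stabilize for `(q;q)_M`, `M ≥ N`) -/
def qInf : PowerSeries ℚ := PowerSeries.mk fun N => coeff N (qPoch N)

/-- `(q^{n+1};q)_∞`, defined coefficient-wise -/
def tailProd (n : ℕ) : PowerSeries ℚ :=
  PowerSeries.mk fun N => coeff N (∏ k ∈ Icc (n + 1) N, (1 - X ^ k))

/-- sum `Σ_{n≥0} a n` of a family of power series with `coeff N (a n) = 0` for `n > N` -/
def seriesSum (a : ℕ → PowerSeries ℚ) : PowerSeries ℚ :=
  PowerSeries.mk fun N => ∑ n ∈ range (N + 1), coeff N (a n)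

/-- double sum `Σ_{n1,n2≥1} a n1 n2`, assuming `coeff N (a n1 n2) = 0` for `n1 + n2 > N` -/
def seriesSum2 (a : ℕ → ℕ → PowerSeries ℚ) : PowerSeries ℚ :=
  PowerSeries.mk fun N => ∑ n1 ∈ Icc 1 N, ∑ n2 ∈ Icc 1 N, coeff N (a n1 n2)

/-- `Σ_{n≥1} q^n/(1−q^n)`, the generating function of `d(n)` -/
def divSum : PowerSeries ℚ := seriesSum fun n => X ^ (n + 1) * (1 - X ^ (n + 1))⁻¹

/-!
The number of parts of a partition `p ⊢ N` is the number of *blocks* `(s, j)` with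
`1 ≤ j ≤ mult_p(s)`, so its square counts pairs of blocks contained in `p`. Removing the
union of two such blocks leaves an arbitrary partition, so a pair of blocks is contained in
`p(N - |union|)` partitions. When `s ≠ s'` the union has size `s j + s' j'`, and the sum over
all pairs of blocks is the convolution `Σ d(a) d(b) p(N - a - b)`. When `s = s'` the union has
size `s · max (j, j')` instead of `s (j + j')`, which adds `Σ_{s,j} j p(N - s j)`. By the
symmetry `s ↔ j` this equals `Σ_{s,j} s p(N - s j) = N p(N)`. On the side of power series,
`1 / (q;q)_∞ = Σ p(n) qⁿ` follows from Euler's product for partitions, and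
`Σ qⁿ / (1 - qⁿ) = Σ d(n) qⁿ`.
-/

open scoped PowerSeries.WithPiTopology

section CoeffTprod

variable {R ι : Type*} [CommRing R]

theorem Finset.dvd_prod_sub_one {a : R} {s : Finset ι} {f : ι → R}
    (h : ∀ i ∈ s, a ∣ f i - 1) : a ∣ ∏ i ∈ s, f i - 1 :=
  prod_induction f (fun x => a ∣ x - 1)
    (fun x y hx hy => by
      rw [show x * y - 1 = (x - 1) * y + (y - 1) by ring]
      exact dvd_add (hx.mul_right y) hy)
    (by simp) h

theorem PowerSeries.coeff_mul_of_X_pow_dvd_sub_one {f g : R⟦X⟧} {n : ℕ}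
    (hg : X ^ (n + 1) ∣ g - 1) : coeff n (f * g) = coeff n f := by
  have h : coeff n (f * (g - 1)) = 0 :=
    X_pow_dvd_iff.mp (hg.mul_left f) n (Nat.lt_succ_self n)
  rwa [mul_sub, mul_one, map_sub, sub_eq_zero] at h

theorem PowerSeries.WithPiTopology.coeff_tprod_eq_coeff_prod [TopologicalSpace R] [T2Space R]
    {f : ι → R⟦X⟧} (hf : Multipliable f) (t : Finset ι) {n : ℕ}
    (h : ∀ i ∉ t, X ^ (n + 1) ∣ f i - 1) :
    coeff n (∏' i, f i) = coeff n (∏ i ∈ t, f i) := by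
  classical
  refine tendsto_nhds_unique (((continuous_coeff R n).tendsto _).comp hf.hasProd)
    (tendsto_nhds_of_eventually_eq ?_)
  filter_upwards [Filter.eventually_ge_atTop t] with s hs
  rw [Function.comp_apply, ← prod_sdiff hs, mul_comm]
  exact coeff_mul_of_X_pow_dvd_sub_one
    (dvd_prod_sub_one fun i hi => h i (mem_sdiff.mp hi).2)

end CoeffTprod

theorem qInf_eq_tprod : qInf = ∏' n, (1 - X ^ (n + 1)) := by
  ext N
  rw [WithPiTopology.coeff_tprod_eq_coeff_prod (WithPiTopology.multipliable_one_sub_X_pow ℚ)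
    (range N), qInf, coeff_mk, qPoch, range_eq_Ico, prod_Ico_add' (fun k => 1 - X ^ k),
    zero_add, Ico_add_one_right_eq_Icc]
  intro n hn
  rw [sub_sub_cancel_left, dvd_neg]
  exact pow_dvd_pow X (by simpa using hn)

theorem hasProd_mk_pp :
    HasProd (fun n => ∑' j : ℕ, (X : ℚ⟦X⟧) ^ ((n + 1) * j))
      (PowerSeries.mk fun n => (pp n : ℚ)) := by
  simpa [Nat.Partition.restricted, pp] using
    Nat.Partition.hasProd_powerSeriesMk_card_restricted ℚ fun _ => True

theorem qInf_mul_mk_pp : qInf * PowerSeries.mk (fun n => (pp n : ℚ)) = 1 := by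
  rw [qInf_eq_tprod]
  refine ((WithPiTopology.multipliable_one_sub_X_pow ℚ).hasProd.mul hasProd_mk_pp).unique ?_
  convert hasProd_one with n
  simp_rw [pow_mul]
  exact WithPiTopology.one_sub_mul_tsum_pow_of_constantCoeff_eq_zero (by simp)

theorem qInf_inv : qInf⁻¹ = PowerSeries.mk fun n => (pp n : ℚ) := by
  refine (inv_eq_iff_mul_eq_one ?_).2 (by rw [mul_comm, qInf_mul_mk_pp])
  exact left_ne_zero_of_mul_eq_one (by rw [← map_mul, qInf_mul_mk_pp, map_one])

theorem PowerSeries.inv_one_sub_X_pow {k : Type*} [Field k] {m : ℕ} (hm : m ≠ 0) :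
    (1 - X ^ m : k⟦X⟧)⁻¹ = PowerSeries.mk fun n => if m ∣ n then 1 else 0 := by
  refine (inv_eq_iff_mul_eq_one (by simp [hm])).2 ?_
  ext n
  rw [mul_sub, mul_one, map_sub, coeff_mul_X_pow', coeff_mk, coeff_one]
  rcases Nat.eq_zero_or_pos n with rfl | hn
  · simp [hm]
  · by_cases hmn : m ≤ n
    · simp [hmn, hn.ne', Nat.dvd_sub_iff_left hmn dvd_rfl]
    · simp [hmn, hn.ne', mt (Nat.le_of_dvd hn) hmn]

theorem coeff_divSum (k : ℕ) : coeff k divSum = d k := by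
  have hterm : ∀ m ∈ Ico 1 (k + 2),
      coeff k (X ^ m * (1 - X ^ m : ℚ⟦X⟧)⁻¹) = if m ∣ k ∧ m ≤ k then 1 else 0 := by
    intro m hm
    rw [coeff_X_pow_mul', inv_one_sub_X_pow (by grind), coeff_mk]
    by_cases hmk : m ≤ k
    · simp [hmk, Nat.dvd_sub_iff_left hmk dvd_rfl]
    · simp [hmk]
  rw [divSum, seriesSum, coeff_mk, range_eq_Ico,
    sum_Ico_add' (fun m => coeff k (X ^ m * (1 - X ^ m : ℚ⟦X⟧)⁻¹)), sum_congr rfl hterm,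
    sum_Ico_succ_top (by omega), if_neg (by omega), add_zero, d, Nat.divisors, card_filter,
    Nat.cast_sum]
  refine sum_congr rfl fun m hm => ?_
  simp [Nat.le_of_lt_succ (mem_Ico.mp hm).2]

def block (x : ℕ × ℕ) : Multiset ℕ := Multiset.replicate x.2 x.1

def blocks (n : ℕ) : Finset (ℕ × ℕ) := Ioc 0 n ×ˢ Ioc 0 n

theorem sum_block (x : ℕ × ℕ) : (block x).sum = x.1 * x.2 := by
  rw [block, Multiset.sum_replicate, smul_eq_mul, mul_comm]

theorem pos_of_mem_block {n : ℕ} {x : ℕ × ℕ} (hx : x ∈ blocks n) {a : ℕ}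
    (ha : a ∈ block x) : 0 < a := by
  rw [Multiset.eq_of_mem_replicate ha]
  exact (mem_Ioc.mp (mem_product.mp hx).1).1

theorem block_union_block_self (s j j' : ℕ) :
    block (s, j) ∪ block (s, j') = block (s, max j j') := by
  ext a
  simp only [block, Multiset.count_union, Multiset.count_replicate]
  split_ifs <;> simp

theorem block_union_block_of_ne {s s' : ℕ} (h : s ≠ s') (j j' : ℕ) :
    block (s, j) ∪ block (s', j') = block (s, j) + block (s', j') := by
  ext a
  simp only [block, Multiset.count_union, Multiset.count_add, Multiset.count_replicate]
  split_ifs <;> grind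

namespace Nat.Partition

variable {n : ℕ}

theorem card_parts_le (p : n.Partition) : p.parts.card ≤ n := by
  simpa [p.parts_sum] using Multiset.card_nsmul_le_sum fun a ha => p.parts_pos ha

theorem count_parts_le (p : n.Partition) (a : ℕ) : p.parts.count a ≤ n :=
  (Multiset.count_le_card a p.parts).trans p.card_parts_le

def partitionWithPartsEquiv {μ : Multiset ℕ} (hμ : ∀ a ∈ μ, 0 < a) (h : μ.sum ≤ n) :
    {p : n.Partition // μ ≤ p.parts} ≃ (n - μ.sum).Partition where
  toFun p := by
    refine ⟨p.1.parts - μ,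
      fun ha => p.1.parts_pos (Multiset.mem_of_le (Multiset.sub_le_self _ _) ha), ?_⟩
    have hs : (p.1.parts - μ).sum + μ.sum = n := by
      rw [← Multiset.sum_add, tsub_add_cancel_of_le p.2, p.1.parts_sum]
    omega
  invFun q := ⟨⟨q.parts + μ, by grind [q.parts_pos], by simp [q.parts_sum, h]⟩, by simp⟩
  left_inv p := Subtype.ext <| Nat.Partition.ext <| tsub_add_cancel_of_le p.2
  right_inv q := Nat.Partition.ext <| add_tsub_cancel_right _ _

theorem sum_map_parts_eq_sum_blocks {M : Type*} [AddCommMonoid M] (p : n.Partition)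
    (w : ℕ → M) :
    (p.parts.map w).sum = ∑ x ∈ blocks n, if block x ≤ p.parts then w x.1 else 0 := by
  classical
  have hcount : ∀ s, ∑ j ∈ Ioc 0 n, (if block (s, j) ≤ p.parts then w s else 0) =
      p.parts.count s • w s := by
    intro s
    have hIoc : {j ∈ Ioc 0 n | j ≤ p.parts.count s} = Ioc 0 (p.parts.count s) := by
      ext j
      have := p.count_parts_le s
      simp only [mem_filter, mem_Ioc]
      omega
    simp_rw [block, ← Multiset.le_count_iff_replicate_le]
    rw [sum_ite, sum_const_zero, add_zero, sum_const, hIoc, Nat.card_Ioc, Nat.sub_zero]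
  rw [blocks, sum_product, sum_congr rfl fun s _ => hcount s, sum_multiset_map_count]
  refine sum_subset (fun s hs => ?_) fun s _ hs => ?_
  · rw [Multiset.mem_toFinset] at hs
    exact mem_Ioc.mpr ⟨p.parts_pos hs, le_of_mem_parts hs⟩
  · rw [Multiset.count_eq_zero.mpr (by simpa using hs), zero_smul]

end Nat.Partition

/-- `p (N - m)`, read as `0` when `m > N` rather than through truncated subtraction. -/
def ppSub (N m : ℕ) : ℕ := if m ≤ N then pp (N - m) else 0

theorem card_filter_le_parts {N : ℕ} {μ : Multiset ℕ} (hμ : ∀ a ∈ μ, 0 < a) :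
    #{p : N.Partition | μ ≤ p.parts} = ppSub N μ.sum := by
  unfold ppSub
  split_ifs with h
  · rw [pp, ← Fintype.card_congr (Nat.Partition.partitionWithPartsEquiv hμ h),
      Fintype.card_subtype]
  · refine card_eq_zero.mpr (filter_eq_empty_iff.mpr fun p _ hp => h ?_)
    obtain ⟨u, hu⟩ := Multiset.le_iff_exists_add.mp hp
    have := p.parts_sum
    rw [hu, Multiset.sum_add] at this
    omega

theorem ppSub_eq_sum_antidiagonal (N m : ℕ) :
    ppSub N m = ∑ p ∈ antidiagonal N, if m = p.2 then pp p.1 else 0 := by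
  rw [← Nat.sum_antidiagonal_swap]
  simp only [Prod.fst_swap, Prod.snd_swap]
  rw [Nat.sum_antidiagonal_eq_sum_range_succ_mk, sum_ite_eq, ppSub]
  simp

theorem sum_ppSub_eq_sum_antidiagonal {α : Type*} (s : Finset α) (f : α → ℕ) (N : ℕ) :
    ∑ x ∈ s, ppSub N (f x) = ∑ p ∈ antidiagonal N, pp p.1 * #{x ∈ s | f x = p.2} := by
  simp_rw [ppSub_eq_sum_antidiagonal, card_filter, mul_sum, mul_ite, mul_one, mul_zero]
  exact sum_comm

theorem p2_eq_sum_card_sq (N : ℕ) : p2 N = ∑ p : N.Partition, p.parts.card ^ 2 := by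
  rw [p2, ← sum_fiberwise_of_maps_to (g := fun p : N.Partition => p.parts.card)
    fun p _ => mem_range.mpr (Nat.lt_succ_of_le p.card_parts_le)]
  refine sum_congr rfl fun m _ => ?_
  rw [pmn, sum_congr rfl fun p hp => by rw [(mem_filter.mp hp).2], sum_const, smul_eq_mul,
    mul_comm]

theorem card_parts_sq_eq_sum_blocks {N : ℕ} (p : N.Partition) :
    p.parts.card ^ 2 =
      ∑ x ∈ blocks N, ∑ y ∈ blocks N, if block x ∪ block y ≤ p.parts then 1 else 0 := by
  have hcard := Nat.Partition.sum_map_parts_eq_sum_blocks p fun _ => 1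
  rw [Multiset.map_const', Multiset.sum_replicate, smul_eq_mul, mul_one] at hcard
  simp_rw [sq, hcard, sum_mul_sum, ite_zero_mul_ite_zero, one_mul, Multiset.union_le_iff]

theorem p2_eq_sum_blocks (N : ℕ) :
    p2 N = ∑ x ∈ blocks N, ∑ y ∈ blocks N, ppSub N (block x ∪ block y).sum := by
  simp_rw [p2_eq_sum_card_sq, card_parts_sq_eq_sum_blocks]
  rw [sum_comm]
  refine sum_congr rfl fun x hx => ?_
  rw [sum_comm]
  refine sum_congr rfl fun y hy => ?_
  rw [sum_boole, Nat.cast_id, card_filter_le_parts fun a ha => ?_]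
  rcases Multiset.mem_union.mp ha with h | h
  exacts [pos_of_mem_block hx h, pos_of_mem_block hy h]

theorem sum_Ioc_max_eq {M : Type*} [AddCommMonoid M] {N j : ℕ} (hj : j ≤ N) (W : ℕ → M)
    (hW : ∀ m, N < m → W m = 0) :
    ∑ j' ∈ Ioc 0 N, W (max j j') = j • W j + ∑ j' ∈ Ioc 0 N, W (j + j') := by
  have hshift : ∑ j' ∈ Ioc 0 N, W (j + j') = ∑ m ∈ Ioc j N, W m :=
    calc ∑ j' ∈ Ioc 0 N, W (j + j') = ∑ m ∈ (Ioc 0 N).map (addLeftEmbedding j), W m :=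
          (sum_map (Ioc 0 N) (addLeftEmbedding j) W).symm
      _ = ∑ m ∈ Ioc j N, W m := by
          rw [map_add_left_Ioc, add_zero, ← sum_Ioc_consecutive _ hj (Nat.le_add_left N j),
            sum_eq_zero fun m hm => hW m (mem_Ioc.mp hm).1, add_zero]
  rw [hshift, ← sum_Ioc_consecutive _ (Nat.zero_le j) hj]
  congr 1
  · rw [sum_congr rfl fun j' hj' => by rw [max_eq_left (mem_Ioc.mp hj').2], sum_const,
      Nat.card_Ioc, Nat.sub_zero]
  · exact sum_congr rfl fun j' hj' => by rw [max_eq_right (mem_Ioc.mp hj').1.le]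

theorem sum_ppSub_block_union {N : ℕ} {x : ℕ × ℕ} (hx : x ∈ blocks N) (s' : ℕ) :
    ∑ j' ∈ Ioc 0 N, ppSub N (block x ∪ block (s', j')).sum =
      ∑ j' ∈ Ioc 0 N, ppSub N (x.1 * x.2 + s' * j') +
        if x.1 = s' then x.2 * ppSub N (x.1 * x.2) else 0 := by
  obtain ⟨s, j⟩ := x
  simp only [blocks, mem_product, mem_Ioc] at hx
  split_ifs with h
  · subst h
    simp_rw [block_union_block_self, sum_block, ← mul_add]
    rw [sum_Ioc_max_eq hx.2.2 (fun m => ppSub N (s * m)) fun m hm => if_neg ?_, add_comm,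
      smul_eq_mul]
    nlinarith
  · simp_rw [block_union_block_of_ne h, Multiset.sum_add, sum_block, add_zero]

theorem p2_eq_sum_blocks_add (N : ℕ) :
    p2 N = ∑ x ∈ blocks N, ∑ y ∈ blocks N, ppSub N (x.1 * x.2 + y.1 * y.2) +
      ∑ x ∈ blocks N, x.2 * ppSub N (x.1 * x.2) := by
  rw [p2_eq_sum_blocks, ← sum_add_distrib]
  refine sum_congr rfl fun x hx => ?_
  rw [blocks, sum_product, sum_product, sum_congr rfl fun s' _ => sum_ppSub_block_union hx s',
    sum_add_distrib, sum_ite_eq, if_pos (mem_product.mp hx).1]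

theorem sum_blocks_snd_mul_ppSub (N : ℕ) :
    ∑ x ∈ blocks N, x.2 * ppSub N (x.1 * x.2) = N * pp N := by
  calc ∑ x ∈ blocks N, x.2 * ppSub N (x.1 * x.2)
      = ∑ x ∈ blocks N, x.1 * ppSub N (x.1 * x.2) := by
        rw [blocks, sum_product, sum_product, sum_comm]
        exact sum_congr rfl fun a _ => sum_congr rfl fun b _ => by rw [mul_comm b a]
    _ = ∑ x ∈ blocks N, x.1 * #{p : N.Partition | block x ≤ p.parts} :=
        sum_congr rfl fun x hx => by
          rw [card_filter_le_parts fun a => pos_of_mem_block hx, sum_block]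
    _ = ∑ p : N.Partition, ∑ x ∈ blocks N, if block x ≤ p.parts then x.1 else 0 := by
        simp_rw [card_filter, mul_sum, mul_ite, mul_one, mul_zero]
        exact sum_comm
    _ = N * pp N := by
        rw [sum_congr rfl fun p _ => by
          rw [← Nat.Partition.sum_map_parts_eq_sum_blocks p fun a => a, Multiset.map_id',
            p.parts_sum], sum_const, card_univ, pp, smul_eq_mul, mul_comm]

theorem card_blocks_filter_mul_eq {N a : ℕ} (ha : a ≤ N) :
    #{x ∈ blocks N | x.1 * x.2 = a} = d a := by
  rcases Nat.eq_zero_or_pos a with rfl | ha0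
  · rw [d, Nat.divisors_zero, card_empty, card_eq_zero, filter_eq_empty_iff]
    intro x hx
    simp only [blocks, mem_product, mem_Ioc] at hx
    exact (Nat.mul_pos hx.1.1 hx.2.1).ne'
  · rw [blocks, ← Nat.divisorsAntidiagonal_eq_prod_filter_of_le ha0.ne' ha,
      ← Nat.map_div_right_divisors, card_map, d]

theorem card_blocks_pairs_filter_eq {N r : ℕ} (hr : r ≤ N) :
    #{z ∈ blocks N ×ˢ blocks N | z.1.1 * z.1.2 + z.2.1 * z.2.2 = r} =
      ∑ q ∈ antidiagonal r, d q.1 * d q.2 := by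
  rw [card_eq_sum_card_fiberwise
    (f := fun z : (ℕ × ℕ) × (ℕ × ℕ) => (z.1.1 * z.1.2, z.2.1 * z.2.2))
    (t := antidiagonal r) fun z hz => mem_antidiagonal.mpr (mem_filter.mp hz).2]
  refine sum_congr rfl fun q hq => ?_
  have hq' := mem_antidiagonal.mp hq
  have hfiber : {z ∈ {z ∈ blocks N ×ˢ blocks N | z.1.1 * z.1.2 + z.2.1 * z.2.2 = r} |
      (z.1.1 * z.1.2, z.2.1 * z.2.2) = q} =
      {x ∈ blocks N | x.1 * x.2 = q.1} ×ˢ {y ∈ blocks N | y.1 * y.2 = q.2} := by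
    ext z
    simp only [mem_filter, mem_product, Prod.ext_iff]
    grind
  rw [hfiber, card_product, card_blocks_filter_mul_eq (by omega),
    card_blocks_filter_mul_eq (by omega)]

theorem sum_blocks_ppSub_add (N : ℕ) :
    ∑ x ∈ blocks N, ∑ y ∈ blocks N, ppSub N (x.1 * x.2 + y.1 * y.2) =
      ∑ p ∈ antidiagonal N, pp p.1 * ∑ q ∈ antidiagonal p.2, d q.1 * d q.2 := by
  rw [← sum_product', sum_ppSub_eq_sum_antidiagonal]
  exact sum_congr rfl fun p hp => by
    rw [card_blocks_pairs_filter_eq (HasAntidiagonal.antidiagonal.snd_le hp)]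

theorem p2_eq_sum_antidiagonal_add (N : ℕ) :
    p2 N =
      ∑ p ∈ antidiagonal N, pp p.1 * ∑ q ∈ antidiagonal p.2, d q.1 * d q.2 + N * pp N := by
  rw [p2_eq_sum_blocks_add, sum_blocks_ppSub_add, sum_blocks_snd_mul_ppSub]

/-- Σ p₂(n) qⁿ = (1/(q;q)_∞)(Σ_{n≥1} qⁿ/(1−qⁿ))² + Σ n p(n) qⁿ. -/
theorem stmt9 :
    (PowerSeries.mk fun n => (p2 n : ℚ)) =
      qInf⁻¹ * divSum ^ 2 + PowerSeries.mk fun n => (n * pp n : ℚ) := by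
  rw [qInf_inv, sq]
  ext N
  simp only [map_add, coeff_mk, coeff_mul, coeff_divSum]
  rw [p2_eq_sum_antidiagonal_add]
  push_cast
  rfl
end
end

section
/- As formal power series in q: Σ_{n≥1} (−1)^n q^{n(n+1)/2} / ((q;q)_n (1−q^n)) = Σ_{n≥0} ((q^{n+1};q)_∞ − 1). -/
open Finset PowerSeries

noncomputable section

/-! Expanding `1/(1 - q^n) = Σ_m q^{nm}` and exchanging the two summations turns the left side
into `Σ_m Σ_{n≥1} (-1)^n q^{mn} q^{n(n+1)/2} / (q;q)_n`, whose inner sum is `(q^{m+1};q)_∞ - 1` by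
Euler's identity. Euler's series `E(x) = Σ_j (-1)^j x^j q^{j(j+1)/2} / (q;q)_j` satisfies
`E(x) = (1 - xq) E(xq)`, so `E(q^n) = (1 - q^{n+1}) ⋯ (1 - q^M) E(q^M)`, and `E(q^M) ≡ 1` modulo
`q^{M+1}`; letting `M` grow identifies `E(q^n)` with `(q^{n+1};q)_∞`. -/

section SeriesSum

theorem coeff_seriesSum (a : ℕ → ℚ⟦X⟧) (N : ℕ) :
    coeff N (seriesSum a) = ∑ j ∈ range (N + 1), coeff N (a j) :=
  coeff_mk _ _

variable {a : ℕ → ℚ⟦X⟧}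

theorem coeff_seriesSum_of_lt (ha : ∀ j, X ^ j ∣ a j) {N M : ℕ} (hNM : N < M) :
    coeff N (seriesSum a) = ∑ j ∈ range M, coeff N (a j) := by
  rw [coeff_seriesSum]
  refine sum_subset (range_subset_range.2 hNM) fun j _ hj => ?_
  exact X_pow_dvd_iff.mp (ha j) N (by simpa using hj)

theorem X_pow_dvd_seriesSum {m : ℕ} (ha : ∀ j, X ^ m ∣ a j) : X ^ m ∣ seriesSum a :=
  X_pow_dvd_iff.mpr fun N hN => by
    rw [coeff_seriesSum]
    exact sum_eq_zero fun j _ => X_pow_dvd_iff.mp (ha j) N hN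

theorem seriesSum_sub (b : ℕ → ℚ⟦X⟧) :
    seriesSum (fun j => a j - b j) = seriesSum a - seriesSum b := by
  ext N
  simp only [coeff_seriesSum, map_sub, sum_sub_distrib]

theorem mul_seriesSum (ha : ∀ j, X ^ j ∣ a j) (φ : ℚ⟦X⟧) :
    φ * seriesSum a = seriesSum fun j => φ * a j := by
  ext N
  rw [coeff_mul, coeff_seriesSum]
  simp only [coeff_mul]
  rw [sum_comm]
  refine sum_congr rfl fun pq hpq => ?_
  rw [coeff_seriesSum_of_lt ha (M := N + 1) (by have := mem_antidiagonal.mp hpq; omega), mul_sum]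

theorem seriesSum_eq_add_seriesSum_succ (ha : ∀ j, X ^ j ∣ a j) :
    seriesSum a = a 0 + seriesSum fun j => a (j + 1) := by
  ext N
  rw [map_add, coeff_seriesSum_of_lt ha (by omega : N < N + 2), sum_range_succ',
    coeff_seriesSum, add_comm]

theorem seriesSum_comm (b : ℕ → ℕ → ℚ⟦X⟧) :
    (seriesSum fun i => seriesSum (b i)) = seriesSum fun j => seriesSum fun i => b i j := by
  ext N
  simp only [coeff_seriesSum]
  exact sum_comm

end SeriesSum

theorem inv_one_sub_eq_seriesSum_pow {y : ℚ⟦X⟧} (hy : X ∣ y) :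
    (1 - y)⁻¹ = seriesSum fun m => y ^ m := by
  have hpow : ∀ m, X ^ m ∣ y ^ m := pow_dvd_pow_of_dvd hy
  have hfix : seriesSum (fun m => y ^ m) = 1 + y * seriesSum fun m => y ^ m := by
    conv_lhs => rw [seriesSum_eq_add_seriesSum_succ hpow]
    rw [mul_seriesSum hpow, pow_zero]
    simp only [pow_succ']
  have hconst : constantCoeff (1 - y) = 1 := by
    rw [map_sub, map_one, X_dvd_iff.mp hy, sub_zero]
  rw [PowerSeries.inv_eq_iff_mul_eq_one (by simp [hconst])]
  linear_combination hfix

theorem coeff_eq_of_X_pow_dvd_sub {φ ψ : ℚ⟦X⟧} {N M : ℕ} (h : X ^ M ∣ φ - ψ) (hNM : N < M) :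
    coeff N φ = coeff N ψ :=
  sub_eq_zero.mp (by rw [← map_sub]; exact X_pow_dvd_iff.mp h N hNM)

theorem X_pow_dvd_prod_one_sub_X_pow_sub_one {s : Finset ℕ} {m : ℕ} (hs : ∀ k ∈ s, m ≤ k) :
    X ^ m ∣ ∏ k ∈ s, (1 - X ^ k : ℚ⟦X⟧) - 1 := by
  refine prod_induction _ (fun p => X ^ m ∣ p - 1) (fun p q hp hq => ?_) (by simp) fun k hk => ?_
  · rw [show p * q - 1 = p * (q - 1) + (p - 1) by ring]
    exact dvd_add (dvd_mul_of_dvd_right hq p) hp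
  · rw [sub_sub_cancel_left, dvd_neg]
    exact pow_dvd_pow X (hs k hk)

theorem coeff_prod_one_sub_X_pow_of_subset {s t : Finset ℕ} {N : ℕ} (hst : s ⊆ t)
    (hN : ∀ k ∈ t \ s, N < k) :
    coeff N (∏ k ∈ t, (1 - X ^ k : ℚ⟦X⟧)) = coeff N (∏ k ∈ s, (1 - X ^ k)) := by
  refine coeff_eq_of_X_pow_dvd_sub (M := N + 1) ?_ (Nat.lt_succ_self N)
  rw [← prod_sdiff hst, ← sub_one_mul]
  exact dvd_mul_of_dvd_left (X_pow_dvd_prod_one_sub_X_pow_sub_one hN) _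

def eulerTerm (j : ℕ) : ℚ⟦X⟧ := ((-1 : ℚ) ^ j) • (X ^ (j * (j + 1) / 2) * (qPoch j)⁻¹)

/-- Euler's expansion of `(xq;q)_∞`. -/
def eulerSeries (x : ℚ⟦X⟧) : ℚ⟦X⟧ := seriesSum fun j => x ^ j * eulerTerm j

theorem eulerTerm_zero : eulerTerm 0 = 1 := by
  simp [eulerTerm, qPoch]

theorem X_pow_dvd_eulerTerm (j : ℕ) : X ^ j ∣ eulerTerm j := by
  have hj : j ≤ j * (j + 1) / 2 := by
    rw [Nat.le_div_iff_mul_le two_pos]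
    nlinarith [Nat.le_add_left j (j * j)]
  exact dvd_smul_of_dvd _ (dvd_mul_of_dvd_left (pow_dvd_pow X hj) _)

theorem eulerTerm_succ_mul (j : ℕ) :
    eulerTerm (j + 1) * (1 - X ^ (j + 1)) = -(X ^ (j + 1) * eulerTerm j) := by
  have hinv : (qPoch (j + 1))⁻¹ * (1 - X ^ (j + 1)) = (qPoch j)⁻¹ := by
    rw [qPoch, prod_Icc_succ_top (Nat.le_add_left 1 j), ← qPoch, PowerSeries.mul_inv_rev,
      mul_right_comm, PowerSeries.inv_mul_cancel (1 - X ^ (j + 1)) (by simp), one_mul]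
  have htri : (j + 1) * (j + 1 + 1) / 2 = j * (j + 1) / 2 + (j + 1) := by
    rw [show (j + 1) * (j + 1 + 1) = j * (j + 1) + (j + 1) * 2 by ring,
      Nat.add_mul_div_right _ _ two_pos]
  rw [eulerTerm, eulerTerm, smul_mul_assoc, mul_assoc, hinv, htri, pow_succ (-1 : ℚ),
    mul_neg_one, neg_smul, mul_smul_comm, pow_add]
  ring_nf

theorem X_pow_dvd_pow_mul_eulerTerm (x : ℚ⟦X⟧) (j : ℕ) : X ^ j ∣ x ^ j * eulerTerm j :=
  dvd_mul_of_dvd_right (X_pow_dvd_eulerTerm j) _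

theorem eulerSeries_sub_one (x : ℚ⟦X⟧) :
    eulerSeries x - 1 = seriesSum fun j => x ^ (j + 1) * eulerTerm (j + 1) := by
  rw [eulerSeries, seriesSum_eq_add_seriesSum_succ (X_pow_dvd_pow_mul_eulerTerm x), pow_zero,
    eulerTerm_zero, one_mul, add_sub_cancel_left]

theorem eulerSeries_eq_one_sub_mul (x : ℚ⟦X⟧) :
    eulerSeries x = (1 - x * X) * eulerSeries (x * X) := by
  have hdiff : eulerSeries x - eulerSeries (x * X) = -(x * X) * eulerSeries (x * X) := by
    rw [eulerSeries, eulerSeries, ← seriesSum_sub,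
      seriesSum_eq_add_seriesSum_succ fun j => dvd_sub (X_pow_dvd_pow_mul_eulerTerm x j)
        (X_pow_dvd_pow_mul_eulerTerm _ j),
      mul_seriesSum (X_pow_dvd_pow_mul_eulerTerm _)]
    simp only [pow_zero, sub_self, zero_add]
    congr 1
    funext j
    linear_combination x ^ (j + 1) * eulerTerm_succ_mul j
  linear_combination hdiff

theorem eulerSeries_X_pow_eq_prod_mul {n M : ℕ} (hnM : n ≤ M) :
    eulerSeries (X ^ n) = (∏ k ∈ Ioc n M, (1 - X ^ k)) * eulerSeries (X ^ M) := by
  induction M, hnM using Nat.le_induction with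
  | base => simp
  | succ M hnM ih =>
    rw [ih, eulerSeries_eq_one_sub_mul (X ^ M), ← pow_succ, prod_Ioc_succ_top hnM, mul_assoc]

theorem X_pow_succ_dvd_eulerSeries_X_pow_sub_one (M : ℕ) :
    X ^ (M + 1) ∣ eulerSeries (X ^ M) - 1 := by
  rw [eulerSeries_sub_one]
  refine X_pow_dvd_seriesSum fun j => ?_
  rw [← pow_mul, pow_succ]
  exact mul_dvd_mul (pow_dvd_pow X (Nat.le_mul_of_pos_right M j.succ_pos))
    (dvd_trans (dvd_pow_self X j.succ_ne_zero) (X_pow_dvd_eulerTerm (j + 1)))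

theorem tailProd_eq_eulerSeries (n : ℕ) : tailProd n = eulerSeries (X ^ n) := by
  ext N
  have hE : X ^ (n + N + 1) ∣ eulerSeries (X ^ n) - ∏ k ∈ Ioc n (n + N), (1 - X ^ k) := by
    rw [eulerSeries_X_pow_eq_prod_mul (Nat.le_add_right n N), ← mul_sub_one]
    exact dvd_mul_of_dvd_right (X_pow_succ_dvd_eulerSeries_X_pow_sub_one _) _
  rw [coeff_eq_of_X_pow_dvd_sub hE (by omega), tailProd, coeff_mk]
  refine (coeff_prod_one_sub_X_pow_of_subset (fun k hk => ?_) fun k hk => ?_).symm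
  · simp only [mem_Icc, mem_Ioc] at hk ⊢
    omega
  · simp only [mem_sdiff, mem_Icc, mem_Ioc] at hk
    omega

/-- Σ_{n≥1} (−1)ⁿ q^{n(n+1)/2}/((q;q)_n(1−qⁿ)) = Σ_{n≥0} ((q^{n+1};q)_∞ − 1). -/
theorem stmt16 :
    seriesSum (fun n => ((-1 : ℚ) ^ (n + 1)) •
        (X ^ ((n + 1) * (n + 2) / 2) * ((qPoch (n + 1))⁻¹ * (1 - X ^ (n + 1))⁻¹))) =
      seriesSum (fun n => tailProd n - 1) := by
  have hterm : ∀ n : ℕ, ((-1 : ℚ) ^ (n + 1)) •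
      (X ^ ((n + 1) * (n + 2) / 2) * ((qPoch (n + 1))⁻¹ * (1 - X ^ (n + 1))⁻¹)) =
        seriesSum fun m => (X ^ m) ^ (n + 1) * eulerTerm (n + 1) := by
    intro n
    have hX : X ∣ (X : ℚ⟦X⟧) ^ (n + 1) := dvd_pow_self X n.succ_ne_zero
    rw [← mul_assoc, ← smul_mul_assoc, ← eulerTerm, inv_one_sub_eq_seriesSum_pow hX,
      mul_seriesSum (pow_dvd_pow_of_dvd hX)]
    simp only [← pow_mul, mul_comm]
  simp only [hterm, tailProd_eq_eulerSeries, eulerSeries_sub_one]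
  exact seriesSum_comm _
end
end
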